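/- The 2-cocycle φ on the truncated resolution R₂ with values in ℤ^(n choose 2), defined by φ(c̃_{i,j}) = g_{i,j}; φ(d̃_{i,j,k,ℓ}) = g_{i,k} − g_{i,ℓ} − g_{k,j} + g_{j,ℓ} if i < k < j < ℓ, = −g_{i,k} + g_{k,j} + g_{i,ℓ} − g_{ℓ,j} if k < i < ℓ < j, and 0 otherwise; and φ(ẽ_{i,k,j}) = g_{i,j} − g_{k,j} if i < k < j, j < i < k, or k < j < i, and 0 otherwise — represents the cohomology class in H²(S_n; ℤ^(n choose 2)) classifying the extension 0 → ℤ^(n choose 2) → G_n → S_n → 1. -/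

import Mathlib

/-!
Each cocycle value is a product of lifts of the two sides of a relator of `S_n`, measured against
the lift of their common product, so the normal-form lift cancels and the value is a word in the
half twists `a_{ij}` of `G_n`. For `r < s < t` the half twists satisfy the Birman–Ko–Lee
relations `a_{rs} a_{st} = a_{st} a_{rt} = a_{rt} a_{rs}`, unlinked and nested half twists
commute, and the full twists `a_{ij}²` commute with each other since they come from the pure braid
group. Hence conjugation by `a_{rs}` swaps the full twists `a_{rt}²` and `a_{st}²`, and the words
collapse to the stated products of full twists.
-/

/-- Artin relations for the braid group on `n` strands (generators indexed by `Fin (n-1)`). -/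
def braidRels (n : ℕ) : Set (FreeGroup (Fin (n - 1))) :=
  {r | ∃ i j : Fin (n - 1),
    ((i : ℕ) + 1 = (j : ℕ) ∧
      r = FreeGroup.of i * FreeGroup.of j * FreeGroup.of i *
        (FreeGroup.of j * FreeGroup.of i * FreeGroup.of j)⁻¹) ∨
    ((i : ℕ) + 1 < (j : ℕ) ∧
      r = FreeGroup.of i * FreeGroup.of j * (FreeGroup.of j * FreeGroup.of i)⁻¹)}

/-- The braid group `B_n`. -/
abbrev BraidGroup (n : ℕ) := PresentedGroup (braidRels n)

/-- The Artin generator `b_t` (`0`-based; trivial outside range). -/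
noncomputable def bgen (n t : ℕ) : BraidGroup n :=
  if h : t < n - 1 then PresentedGroup.of (⟨t, h⟩ : Fin (n - 1)) else 1

/-- The product `b_i ⋯ b_{j-1}`. -/
noncomputable def bpref (n i j : ℕ) : BraidGroup n :=
  ((List.range' i (j - i)).map (bgen n)).prod

/-- The half twist `b_{i,j}` (for strands `i < j`, `0`-based). -/
noncomputable def halfTwist (n i j : ℕ) : BraidGroup n :=
  bpref n i (j - 1) * bgen n (j - 1) * (bpref n i (j - 1))⁻¹

/-- The half twist for unordered indices. -/
noncomputable def bb (n i j : ℕ) : BraidGroup n := halfTwist n (min i j) (max i j)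

/-- The standard generator condition for the projection `B_n → S_n`. -/
def IsBraidProj (n : ℕ) (π : BraidGroup n →* Equiv.Perm (Fin n)) : Prop :=
  ∀ i : Fin (n - 1), π (PresentedGroup.of i) =
    Equiv.swap ⟨(i : ℕ), by have := i.2; omega⟩ ⟨(i : ℕ) + 1, by have := i.2; omega⟩

/-- `G_n = B_n/[PB_n, PB_n]`. -/
abbrev Gq (n : ℕ) (π : BraidGroup n →* Equiv.Perm (Fin n)) :=
  BraidGroup n ⧸ (⁅π.ker, π.ker⁆ : Subgroup (BraidGroup n))

/-- Image of the half twist `b_{i,j}` in `G_n`. -/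
noncomputable def ht (n : ℕ) (π : BraidGroup n →* Equiv.Perm (Fin n)) (i j : ℕ) : Gq n π :=
  QuotientGroup.mk (bb n i j)

/-- Image of the full twist `b_{i,j}²` in `G_n`. -/
noncomputable def ft (n : ℕ) (π : BraidGroup n →* Equiv.Perm (Fin n)) (i j : ℕ) : Gq n π :=
  QuotientGroup.mk ((bb n i j) ^ 2)


open scoped commutatorElement

section Group

variable {G H : Type*} [Group G] [Group H]

def IsBKLTriple (x y z : G) : Prop :=
  x * y = y * z ∧ y * z = z * x

namespace IsBKLTriple

variable {x y z : G}

theorem rotate (h : IsBKLTriple x y z) : IsBKLTriple y z x :=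
  ⟨h.2, (h.1.trans h.2).symm⟩

theorem map (h : IsBKLTriple x y z) (f : G →* H) : IsBKLTriple (f x) (f y) (f z) :=
  ⟨by rw [← map_mul, ← map_mul, h.1], by rw [← map_mul, ← map_mul, h.2]⟩

theorem conj_eq (h : IsBKLTriple x y z) : x * y * x⁻¹ = z :=
  mul_inv_eq_of_eq_mul (h.1.trans h.2)

theorem conj_sq_eq (h : IsBKLTriple x y z) (hc : Commute (x ^ 2) (y ^ 2)) :
    x * z ^ 2 * x⁻¹ = y ^ 2 := by
  rw [← h.conj_eq, conj_pow]
  calc x * (x * y ^ 2 * x⁻¹) * x⁻¹ = x ^ 2 * y ^ 2 * (x ^ 2)⁻¹ := by simp only [sq]; group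
    _ = y ^ 2 := by rw [hc.eq]; group

theorem mul_mul_inv_mul_inv_eq (h : IsBKLTriple x y z) (hc : Commute (x ^ 2) (y ^ 2)) :
    x * z * x⁻¹ * y⁻¹ = x ^ 2 * (z ^ 2)⁻¹ := by
  have hzx : z * x ^ 2 * z⁻¹ = y ^ 2 := by rw [← conj_pow, h.rotate.rotate.conj_eq]
  calc x * z * x⁻¹ * y⁻¹ = x * z * x⁻¹ * (x⁻¹ * (x * y * x⁻¹) * x)⁻¹ := by group
    _ = x * (z * x ^ 2 * z⁻¹)⁻¹ * x := by rw [h.conj_eq]; group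
    _ = x * (x * z ^ 2 * x⁻¹)⁻¹ * x := by rw [hzx, h.conj_sq_eq hc]
    _ = x ^ 2 * (z ^ 2)⁻¹ := by simp only [sq]; group

end IsBKLTriple

theorem mul_inv_mul_inv_mul_inv_of_commute {a b c d : G} (hab : Commute a b) (hac : Commute a c)
    (had : Commute a d) (hbc : Commute b c) (hbd : Commute b d) (hcd : Commute c d) :
    (a * b⁻¹ * c⁻¹ * d)⁻¹ = a⁻¹ * b * c * d⁻¹ := by
  rw [((had.mul_left hbd.inv_left).mul_left hcd.inv_left).mul_inv,
    (hac.inv_right.mul_left hbc.inv_inv).mul_inv, hab.inv_right.mul_inv, inv_inv, inv_inv]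

theorem commute_mk_of_mem_ker {f : G →* H} {x y : G} (hx : x ∈ f.ker) (hy : y ∈ f.ker) :
    Commute (x : G ⧸ ⁅f.ker, f.ker⁆) y := by
  rw [← commutatorElement_eq_one_iff_commute, ← QuotientGroup.mk'_apply,
    ← QuotientGroup.mk'_apply, ← map_commutatorElement, QuotientGroup.mk'_apply,
    QuotientGroup.eq_one_iff]
  exact Subgroup.commutator_mem_commutator hx hy

end Group

namespace BraidGroup

variable {n : ℕ}

theorem bgen_commute {a b : ℕ} (h : a + 2 ≤ b) : Commute (bgen n a) (bgen n b) := by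
  unfold bgen
  by_cases hb : b < n - 1
  · rw [dif_pos (by omega : a < n - 1), dif_pos hb]
    exact PresentedGroup.mk_eq_mk_of_mul_inv_mem
      ⟨⟨a, by omega⟩, ⟨b, hb⟩, Or.inr ⟨by simp only; omega, rfl⟩⟩
  · rw [dif_neg hb]
    exact Commute.one_right _

theorem bgen_braid {a : ℕ} (h : a + 2 < n) :
    bgen n a * bgen n (a + 1) * bgen n a = bgen n (a + 1) * bgen n a * bgen n (a + 1) := by
  unfold bgen
  rw [dif_pos (by omega), dif_pos (by omega)]
  exact PresentedGroup.mk_eq_mk_of_mul_inv_mem ⟨_, _, Or.inl ⟨rfl, rfl⟩⟩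

theorem bpref_of_le {i j : ℕ} (h : j ≤ i) : bpref n i j = 1 := by
  simp [bpref, Nat.sub_eq_zero_of_le h]

theorem bpref_eq_bgen_mul {i j : ℕ} (h : i < j) : bpref n i j = bgen n i * bpref n (i + 1) j := by
  rw [bpref, show j - i = j - (i + 1) + 1 by omega, List.range'_succ]
  rfl

theorem bpref_succ {i j : ℕ} (h : i ≤ j) : bpref n i (j + 1) = bpref n i j * bgen n j := by
  rw [bpref, bpref, show j + 1 - i = j - i + 1 by omega, List.range'_1_concat,
    Nat.add_sub_cancel' h, List.map_append, List.prod_append]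
  simp

theorem bpref_append {i j k : ℕ} (hij : i ≤ j) (hjk : j ≤ k) :
    bpref n i k = bpref n i j * bpref n j k := by
  rw [bpref, bpref, bpref, show k - i = j - i + (k - j) by omega, ← List.range'_append_1,
    Nat.add_sub_cancel' hij, List.map_append, List.prod_append]

theorem commute_bpref {x : BraidGroup n} {i j : ℕ}
    (h : ∀ t, i ≤ t → t < j → Commute x (bgen n t)) : Commute x (bpref n i j) := by
  refine Commute.list_prod_right _ _ fun y hy => ?_
  obtain ⟨t, ht, rfl⟩ := List.mem_map.mp hy
  rw [List.mem_range'_1] at ht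
  exact h t ht.1 (by omega)

theorem halfTwist_succ (i j : ℕ) :
    halfTwist n i (j + 1) = bpref n i j * bgen n j * (bpref n i j)⁻¹ := rfl

theorem commute_halfTwist {x : BraidGroup n} {i j : ℕ} (hij : i < j)
    (h : ∀ t, i ≤ t → t < j → Commute x (bgen n t)) : Commute x (halfTwist n i j) := by
  obtain ⟨m, rfl⟩ : ∃ m, j = m + 1 := ⟨j - 1, by omega⟩
  have hb := commute_bpref (j := m) fun t h₁ h₂ => h t h₁ (by omega)
  exact (hb.mul_right (h m (by omega) (by omega))).mul_right hb.inv_right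

theorem commute_bgen_halfTwist_of_far {t i j : ℕ} (hij : i < j)
    (h : t + 2 ≤ i ∨ j + 1 ≤ t) : Commute (bgen n t) (halfTwist n i j) :=
  commute_halfTwist hij fun u _ _ => by
    rcases h with h | h
    · exact bgen_commute (by omega)
    · exact (bgen_commute (by omega)).symm

theorem bpref_mul_bgen {i j t : ℕ} (hit : i ≤ t) (htj : t + 2 ≤ j) (hj : j < n) :
    SemiconjBy (bpref n i j) (bgen n t) (bgen n (t + 1)) := by
  have hsplit : bpref n i j = bpref n i t * (bgen n t * (bgen n (t + 1) * bpref n (t + 2) j)) := by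
    rw [bpref_append hit (by omega), bpref_eq_bgen_mul (i := t) (by omega),
      bpref_eq_bgen_mul (i := t + 1) (by omega)]
  have h₁ : Commute (bgen n t) (bpref n (t + 2) j) :=
    commute_bpref fun u hu _ => bgen_commute (by omega)
  have h₂ : Commute (bgen n (t + 1)) (bpref n i t) :=
    commute_bpref fun u _ hu => (bgen_commute (by omega)).symm
  calc bpref n i j * bgen n t
      = bpref n i t * (bgen n t * bgen n (t + 1) * bgen n t) * bpref n (t + 2) j := by
        rw [hsplit]; simp only [mul_assoc]; rw [← h₁.eq]
    _ = bpref n i t * (bgen n (t + 1) * bgen n t * bgen n (t + 1)) * bpref n (t + 2) j := by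
        rw [bgen_braid (by omega)]
    _ = bgen n (t + 1) * bpref n i j := by
        rw [hsplit, ← mul_assoc (bgen n (t + 1)), h₂.eq]; simp only [mul_assoc]

theorem halfTwist_succ_eq_bpref_mul_inv {i j : ℕ} (h : i ≤ j) :
    halfTwist n i (j + 1) = bpref n i (j + 1) * (bpref n i j)⁻¹ := by
  rw [halfTwist_succ, bpref_succ h]

theorem commute_bgen_halfTwist_of_inside {t k l : ℕ} (hkt : k ≤ t) (htl : t + 3 ≤ l)
    (hl : l < n) : Commute (bgen n (t + 1)) (halfTwist n k l) := by
  obtain ⟨m, rfl⟩ : ∃ m, l = m + 1 := ⟨l - 1, by omega⟩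
  rw [halfTwist_succ_eq_bpref_mul_inv (by omega)]
  exact ((bpref_mul_bgen hkt (by omega) hl).mul_left
    (bpref_mul_bgen hkt (by omega) (by omega)).inv_symm_left).symm

theorem halfTwist_self_succ (i : ℕ) : halfTwist n i (i + 1) = bgen n i := by
  simp [halfTwist_succ, bpref_of_le]

theorem halfTwist_eq_conj_succ_left {i j : ℕ} (h : i + 1 < j) :
    halfTwist n i j = bgen n i * halfTwist n (i + 1) j * (bgen n i)⁻¹ := by
  obtain ⟨m, rfl⟩ : ∃ m, j = m + 1 := ⟨j - 1, by omega⟩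
  rw [halfTwist_succ, halfTwist_succ, bpref_eq_bgen_mul (by omega)]
  group

theorem halfTwist_succ_eq_conj {i j : ℕ} (hij : i < j) (hj : j + 1 < n) :
    halfTwist n i (j + 1) = (bgen n j)⁻¹ * halfTwist n i j * bgen n j := by
  obtain ⟨m, rfl⟩ : ∃ m, j = m + 1 := ⟨j - 1, by omega⟩
  have hc : Commute (bgen n (m + 1)) (bpref n i m) :=
    commute_bpref fun t _ ht => (bgen_commute (by omega)).symm
  have hb : bgen n m * bgen n (m + 1) * (bgen n m)⁻¹
      = (bgen n (m + 1))⁻¹ * bgen n m * bgen n (m + 1) := by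
    calc bgen n m * bgen n (m + 1) * (bgen n m)⁻¹
        = (bgen n (m + 1))⁻¹ * (bgen n (m + 1) * bgen n m * bgen n (m + 1)) *
            (bgen n m)⁻¹ := by
          group
      _ = (bgen n (m + 1))⁻¹ * bgen n m * bgen n (m + 1) := by
          rw [← bgen_braid (by omega)]; group
  rw [halfTwist_succ, halfTwist_succ, bpref_succ (by omega)]
  calc bpref n i m * bgen n m * bgen n (m + 1) * (bpref n i m * bgen n m)⁻¹
      = bpref n i m * (bgen n m * bgen n (m + 1) * (bgen n m)⁻¹) * (bpref n i m)⁻¹ := by group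
    _ = (bpref n i m * (bgen n (m + 1))⁻¹) * bgen n m *
          (bgen n (m + 1) * (bpref n i m)⁻¹) := by
        rw [hb]; group
    _ = (bgen n (m + 1))⁻¹ * (bpref n i m * bgen n m * (bpref n i m)⁻¹) * bgen n (m + 1) := by
        rw [← hc.inv_left.eq, hc.inv_right.eq]; group

theorem halfTwist_mul_halfTwist_eq_right {r s t : ℕ} (hrs : r < s) (hst : s < t) (ht : t < n) :
    halfTwist n r s * halfTwist n s t = halfTwist n s t * halfTwist n r t := by
  induction t, hst using Nat.le_induction with
  | base => rw [halfTwist_self_succ, halfTwist_succ_eq_conj hrs ht]; group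
  | succ t hst ih =>
    have hc : Commute (bgen n t) (halfTwist n r s) :=
      commute_bgen_halfTwist_of_far hrs (Or.inr (by omega))
    rw [halfTwist_succ_eq_conj (by omega) ht, halfTwist_succ_eq_conj (by omega) ht]
    calc halfTwist n r s * ((bgen n t)⁻¹ * halfTwist n s t * bgen n t)
        = (bgen n t)⁻¹ * (halfTwist n r s * halfTwist n s t) * bgen n t := by
          rw [← mul_assoc, ← mul_assoc, ← hc.inv_left.eq]; group
      _ = (bgen n t)⁻¹ * halfTwist n s t * bgen n t *
            ((bgen n t)⁻¹ * halfTwist n r t * bgen n t) := by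
          rw [ih (by omega)]; group

theorem halfTwist_mul_halfTwist_eq_left {r s t : ℕ} (hrs : r < s) (hst : s < t) :
    halfTwist n r s * halfTwist n s t = halfTwist n r t * halfTwist n r s := by
  obtain ⟨d, rfl⟩ : ∃ d, s = r + 1 + d := ⟨s - (r + 1), by omega⟩
  induction d generalizing r with
  | zero => rw [halfTwist_self_succ, halfTwist_eq_conj_succ_left hst]; group
  | succ d ih =>
    have hc : Commute (bgen n r) (halfTwist n (r + 1 + (d + 1)) t) :=
      commute_bgen_halfTwist_of_far (by omega) (Or.inl (by omega))
    have ih' := ih (r := r + 1) (by omega) (by omega)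
    rw [show r + 1 + 1 + d = r + 1 + (d + 1) by omega] at ih'
    rw [halfTwist_eq_conj_succ_left (i := r) (by omega),
      halfTwist_eq_conj_succ_left (i := r) (by omega)]
    calc bgen n r * halfTwist n (r + 1) (r + 1 + (d + 1)) * (bgen n r)⁻¹ *
          halfTwist n (r + 1 + (d + 1)) t
        = bgen n r * (halfTwist n (r + 1) (r + 1 + (d + 1)) * halfTwist n (r + 1 + (d + 1)) t) *
          (bgen n r)⁻¹ := by
          rw [mul_assoc _ (bgen n r)⁻¹, hc.inv_left.eq]; group
      _ = _ := by rw [ih']; group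

theorem isBKLTriple_halfTwist {r s t : ℕ} (hrs : r < s) (hst : s < t) (ht : t < n) :
    IsBKLTriple (halfTwist n r s) (halfTwist n s t) (halfTwist n r t) :=
  ⟨halfTwist_mul_halfTwist_eq_right hrs hst ht,
    (halfTwist_mul_halfTwist_eq_right hrs hst ht).symm.trans
      (halfTwist_mul_halfTwist_eq_left hrs hst)⟩

theorem commute_halfTwist_of_lt {i j k l : ℕ} (hij : i < j) (hjk : j < k) (hkl : k < l) :
    Commute (halfTwist n i j) (halfTwist n k l) :=
  commute_halfTwist hkl fun _ hk _ => (commute_bgen_halfTwist_of_far hij (Or.inr (by omega))).symm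

theorem commute_halfTwist_of_nested {k i j l : ℕ} (hki : k < i) (hij : i < j) (hjl : j < l)
    (hl : l < n) : Commute (halfTwist n k l) (halfTwist n i j) :=
  commute_halfTwist hij fun t hit htj => by
    obtain ⟨t, rfl⟩ : ∃ u, t = u + 1 := ⟨t - 1, by omega⟩
    exact (commute_bgen_halfTwist_of_inside (by omega) (by omega) hl).symm

end BraidGroup

section Quotient

variable {n : ℕ} {π : BraidGroup n →* Equiv.Perm (Fin n)}

theorem ht_comm (a b : ℕ) : ht n π a b = ht n π b a := by
  simp only [ht, bb, min_comm, max_comm]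

theorem ht_of_lt {a b : ℕ} (h : a < b) : ht n π a b = QuotientGroup.mk (halfTwist n a b) := by
  rw [ht, bb, min_eq_left h.le, max_eq_right h.le]

theorem ft_eq_sq (a b : ℕ) : ft n π a b = ht n π a b ^ 2 := rfl

theorem commute_ht_sq {p : Gq n π →* Equiv.Perm (Fin n)}
    (hp : ∀ x : BraidGroup n, p (QuotientGroup.mk x) = π x)
    (hswap : ∀ a b : Fin n, a ≠ b → p (ht n π a b) = Equiv.swap a b)
    {a b c d : Fin n} (hab : a ≠ b) (hcd : c ≠ d) :
    Commute (ht n π a b ^ 2) (ht n π c d ^ 2) := by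
  have hpure : ∀ a b : Fin n, a ≠ b → bb n a b ^ 2 ∈ π.ker := fun a b hab => by
    rw [MonoidHom.mem_ker, ← hp, ← ft, ft_eq_sq, map_pow, hswap a b hab, sq,
      Equiv.swap_mul_self]
  exact commute_mk_of_mem_ker (hpure a b hab) (hpure c d hcd)

theorem isBKLTriple_ht {r s t : Fin n} (hrs : r < s) (hst : s < t) :
    IsBKLTriple (ht n π r s) (ht n π s t) (ht n π r t) := by
  rw [ht_of_lt hrs, ht_of_lt hst, ht_of_lt (hrs.trans hst)]
  exact (BraidGroup.isBKLTriple_halfTwist hrs hst t.2).map (QuotientGroup.mk' _)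

theorem isBKLTriple_ht_of_cyclic {a b c : Fin n}
    (h : a < b ∧ b < c ∨ c < a ∧ a < b ∨ b < c ∧ c < a) :
    IsBKLTriple (ht n π a b) (ht n π b c) (ht n π c a) := by
  rcases h with ⟨h₁, h₂⟩ | ⟨h₁, h₂⟩ | ⟨h₁, h₂⟩
  · simpa only [ht_comm c a] using isBKLTriple_ht (π := π) h₁ h₂
  · simpa only [ht_comm c b] using (isBKLTriple_ht (π := π) h₁ h₂).rotate
  · simpa only [ht_comm b a] using (isBKLTriple_ht (π := π) h₁ h₂).rotate.rotate

theorem commute_ht_of_not_linked {i j k l : Fin n} (hij : i < j) (hkl : k < l)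
    (h : j < k ∨ l < i ∨ i < k ∧ l < j ∨ k < i ∧ j < l) :
    Commute (ht n π i j) (ht n π k l) := by
  rw [ht_of_lt hij, ht_of_lt hkl]
  let q := QuotientGroup.mk' (⁅π.ker, π.ker⁆ : Subgroup (BraidGroup n))
  rcases h with h | h | ⟨h₁, h₂⟩ | ⟨h₁, h₂⟩
  · exact (BraidGroup.commute_halfTwist_of_lt hij h hkl).map q
  · exact ((BraidGroup.commute_halfTwist_of_lt hkl h hij).map q).symm
  · exact (BraidGroup.commute_halfTwist_of_nested h₁ hkl h₂ j.2).map q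
  · exact ((BraidGroup.commute_halfTwist_of_nested h₁ hij h₂ l.2).map q).symm

theorem commutator_ht_of_linked
    (hsq : ∀ a b c d : Fin n, a ≠ b → c ≠ d → Commute (ht n π a b ^ 2) (ht n π c d ^ 2))
    {r s t u : Fin n} (hrs : r < s) (hst : s < t) (htu : t < u) :
    ⁅ht n π r t, ht n π s u⁆ =
      ft n π r s * (ft n π r u)⁻¹ * (ft n π s t)⁻¹ * ft n π t u := by
  set A := ht n π r s
  set B := ht n π r t
  set C := ht n π r u
  set D := ht n π s t
  set E := ht n π s u
  set F := ht n π t u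
  have T₁ : IsBKLTriple A D B := isBKLTriple_ht hrs hst
  have T₂ : IsBKLTriple A E C := isBKLTriple_ht hrs (hst.trans htu)
  have T₃ : IsBKLTriple D F E := isBKLTriple_ht hst htu
  have hDC : D * C * D⁻¹ = C := by
    rw [(commute_ht_of_not_linked (by omega) hst (by omega)).symm.eq, mul_inv_cancel_right]
  have hAF : A * F ^ 2 * A⁻¹ = F ^ 2 := by
    rw [((commute_ht_of_not_linked hrs htu (by omega)).pow_right 2).eq, mul_inv_cancel_right]
  have hCA : C * A ^ 2 * C⁻¹ = E ^ 2 := by rw [← conj_pow, T₂.rotate.rotate.conj_eq]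
  have hDA : D * A ^ 2 * D⁻¹ = B ^ 2 :=
    T₁.rotate.conj_sq_eq (hsq s t r t (by omega) (by omega))
  have hDE : D * E ^ 2 * D⁻¹ = F ^ 2 := T₃.conj_sq_eq (hsq s t t u (by omega) (by omega))
  have hAB : A * B ^ 2 * A⁻¹ = D ^ 2 := T₁.conj_sq_eq (hsq r s s t (by omega) (by omega))
  have hEA : E * A ^ 2 * E⁻¹ = C ^ 2 :=
    T₂.rotate.conj_sq_eq (hsq s u r u (by omega) (by omega))
  have hcomm : Commute ((D ^ 2)⁻¹ * F ^ 2) (A ^ 2 * (C ^ 2)⁻¹) :=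
    ((hsq s t r s (by omega) (by omega)).inv_left.mul_right
      (hsq s t r u (by omega) (by omega)).inv_inv).mul_left
      ((hsq t u r s (by omega) (by omega)).mul_right (hsq t u r u (by omega) (by omega)).inv_right)
  simp only [ft_eq_sq]
  calc ⁅B, E⁆ = A * D * A⁻¹ * E * (A * D * A⁻¹)⁻¹ * E⁻¹ := by
        rw [T₁.conj_eq, commutatorElement_def]
    _ = A * D * (A ^ 2)⁻¹ * (A * E * A⁻¹) * A ^ 2 * D⁻¹ * A⁻¹ * E⁻¹ := by
        simp only [sq]; group
    _ = A * (D * A ^ 2 * D⁻¹)⁻¹ * (D * (C * A ^ 2 * C⁻¹) * D⁻¹) * (D * C * D⁻¹) *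
          A⁻¹ * E⁻¹ := by
        rw [T₂.conj_eq]; simp only [sq]; group
    _ = A * (B ^ 2)⁻¹ * (D * E ^ 2 * D⁻¹) * (A * E * A⁻¹) * A⁻¹ * E⁻¹ := by
        rw [hDA, hCA, hDC, T₂.conj_eq]
    _ = (A * B ^ 2 * A⁻¹)⁻¹ * (A * F ^ 2 * A⁻¹) * A ^ 2 * (E * A ^ 2 * E⁻¹)⁻¹ := by
        rw [hDE]; simp only [sq]; group
    _ = (D ^ 2)⁻¹ * F ^ 2 * (A ^ 2 * (C ^ 2)⁻¹) := by rw [hAB, hAF, hEA, mul_assoc]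
    _ = A ^ 2 * (C ^ 2)⁻¹ * (D ^ 2)⁻¹ * F ^ 2 := by rw [hcomm.eq, ← mul_assoc]

theorem commutator_ht_of_linked_rev
    (hsq : ∀ a b c d : Fin n, a ≠ b → c ≠ d → Commute (ht n π a b ^ 2) (ht n π c d ^ 2))
    {r s t u : Fin n} (hrs : r < s) (hst : s < t) (htu : t < u) :
    ⁅ht n π s u, ht n π r t⁆ =
      (ft n π r s)⁻¹ * ft n π r u * ft n π s t * (ft n π t u)⁻¹ := by
  rw [← commutatorElement_inv, commutator_ht_of_linked hsq hrs hst htu]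
  exact mul_inv_mul_inv_mul_inv_of_commute (hsq r s r u (by omega) (by omega))
    (hsq r s s t (by omega) (by omega)) (hsq r s t u (by omega) (by omega))
    (hsq r u s t (by omega) (by omega)) (hsq r u t u (by omega) (by omega))
    (hsq s t t u (by omega) (by omega))

theorem commutator_ht_eq
    (hsq : ∀ a b c d : Fin n, a ≠ b → c ≠ d → Commute (ht n π a b ^ 2) (ht n π c d ^ 2))
    {i j k l : Fin n} (hij : i < j) (hkl : k < l) (hik : i ≠ k) (hil : i ≠ l) (hjk : j ≠ k)
    (hjl : j ≠ l) :
    ⁅ht n π i j, ht n π k l⁆ =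
      if i < k ∧ k < j ∧ j < l then
        ft n π i k * (ft n π i l)⁻¹ * (ft n π k j)⁻¹ * ft n π j l
      else if k < i ∧ i < l ∧ l < j then
        (ft n π k i)⁻¹ * ft n π k j * ft n π i l * (ft n π l j)⁻¹
      else 1 := by
  split_ifs with h₁ h₂
  · exact commutator_ht_of_linked hsq h₁.1 h₁.2.1 h₁.2.2
  · exact commutator_ht_of_linked_rev hsq h₂.1 h₂.2.1 h₂.2.2
  · exact commutatorElement_eq_one_iff_commute.mpr (commute_ht_of_not_linked hij hkl (by omega))

theorem ht_mul_ht_mul_inv_mul_inv_eq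
    (hsq : ∀ a b c d : Fin n, a ≠ b → c ≠ d → Commute (ht n π a b ^ 2) (ht n π c d ^ 2))
    {i k j : Fin n} (hik : i ≠ k) (hij : i ≠ j) (hkj : k ≠ j) :
    ht n π i j * ht n π j k * (ht n π i j)⁻¹ * (ht n π i k)⁻¹ =
      if (i < k ∧ k < j) ∨ (j < i ∧ i < k) ∨ (k < j ∧ j < i) then
        ft n π i j * (ft n π k j)⁻¹
      else 1 := by
  split_ifs with h
  · have T := (isBKLTriple_ht_of_cyclic (π := π) h).rotate.rotate
    rw [ht_comm j i, ht_comm k j] at T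
    rw [T.mul_mul_inv_mul_inv_eq (hsq i j i k hij hik), ft_eq_sq, ft_eq_sq, ht_comm k j]
  · have T := isBKLTriple_ht_of_cyclic (π := π) (a := i) (b := j) (c := k) (by omega)
    rw [ht_comm k i] at T
    exact mul_inv_eq_one.mpr T.conj_eq

end Quotient

theorem statement11_general (n : ℕ) (π : BraidGroup n →* Equiv.Perm (Fin n))
    (p : Gq n π →* Equiv.Perm (Fin n))
    (hp : ∀ x : BraidGroup n, p (QuotientGroup.mk x) = π x)
    (s : Equiv.Perm (Fin n) → Gq n π)
    (hsec : ∀ g, p (s g) = g)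
    -- the section lifts each transposition to the corresponding half twist
    (hs : ∀ i j : Fin n, i < j → s (Equiv.swap i j) = ht n π i j) :
    -- value on c̃_{i,j}
    (∀ i j : Fin n, i < j → s (Equiv.swap i j) * s (Equiv.swap i j) = ft n π i j) ∧
    -- value on d̃_{i,j,k,ℓ}
    (∀ i j k l : Fin n, i < j → k < l →
      ({i, j} : Finset (Fin n)) ∩ {k, l} = ∅ →
      (s (Equiv.swap i j) * s (Equiv.swap k l) *
          (s (Equiv.swap i j * Equiv.swap k l))⁻¹) *
        (s (Equiv.swap k l) * s (Equiv.swap i j) *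
          (s (Equiv.swap k l * Equiv.swap i j))⁻¹)⁻¹ =
        if i < k ∧ k < j ∧ j < l then
          ft n π i k * (ft n π i l)⁻¹ * (ft n π k j)⁻¹ * ft n π j l
        else if k < i ∧ i < l ∧ l < j then
          (ft n π k i)⁻¹ * ft n π k j * ft n π i l * (ft n π l j)⁻¹
        else 1) ∧
    -- value on ẽ_{i,k,j}
    (∀ i k j : Fin n, i ≠ k → i ≠ j → k ≠ j →
      (s (Equiv.swap i j) * s (Equiv.swap j k) *
          (s (Equiv.swap i j * Equiv.swap j k))⁻¹) *
        (s (Equiv.swap i k) * s (Equiv.swap i j) *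
          (s (Equiv.swap i k * Equiv.swap i j))⁻¹)⁻¹ =
        if (i < k ∧ k < j) ∨ (j < i ∧ i < k) ∨ (k < j ∧ j < i) then
          ft n π i j * (ft n π k j)⁻¹
        else 1) := by
  have hsu : ∀ a b : Fin n, a ≠ b → s (Equiv.swap a b) = ht n π a b := fun a b hab => by
    rcases hab.lt_or_gt with h | h
    · exact hs a b h
    · rw [Equiv.swap_comm, hs b a h, ht_comm]
  have hsq : ∀ a b c d : Fin n, a ≠ b → c ≠ d →
      Commute (ht n π a b ^ 2) (ht n π c d ^ 2) :=
    fun _ _ _ _ => commute_ht_sq hp fun a b hab => by rw [← hsu a b hab, hsec]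
  have hcancel : ∀ u v w x : Gq n π,
      u * v * x⁻¹ * (w * u * x⁻¹)⁻¹ = u * v * u⁻¹ * w⁻¹ := fun _ _ _ _ => by group
  refine ⟨fun i j hij => by rw [hs i j hij, ft_eq_sq, sq], fun i j k l hij hkl hdisj => ?_,
    fun i k j hik hij hkj => ?_⟩
  · obtain ⟨⟨hki, hkj⟩, hli, hlj⟩ : (k ≠ i ∧ k ≠ j) ∧ l ≠ i ∧ l ≠ j := by
      simpa using Finset.disjoint_iff_inter_eq_empty.mpr hdisj
    have hnodup : [i, j, k, l].Nodup := by
      simp [hij.ne, hkl.ne, hki.symm, hkj.symm, hli.symm, hlj.symm]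
    rw [(Equiv.Perm.disjoint_swap_swap hnodup).commute.eq,
      hsu i j hij.ne, hsu k l hkl.ne, hcancel, ← commutatorElement_def]
    exact commutator_ht_eq hsq hij hkl hki.symm hli.symm hkj.symm hlj.symm
  · have hperm : Equiv.swap i k * Equiv.swap i j = Equiv.swap i j * Equiv.swap j k := by
      rw [Equiv.swap_mul_eq_mul_swap, Equiv.swap_inv, Equiv.swap_apply_left,
        Equiv.swap_apply_of_ne_of_ne hik.symm hkj]
    rw [hperm, hsu i j hij, hsu j k hkj.symm, hsu i k hik, hcancel]
    exact ht_mul_ht_mul_inv_mul_inv_eq hsq hik hij hkj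

/-- The 2-cocycle `φ` classifying the extension
`0 → ℤ^(n choose 2) → G_n → S_n → 1` (computed, via the truncated resolution coming from the
presentation complex of `S_n`, from the normalized normal-form section `s` lifting `σ_{i,j}`
to `σ̃_{i,j}`) is given on the 2-chain generators by: `φ(c̃_{i,j}) = g_{i,j}`;
`φ(d̃_{i,j,k,ℓ}) = g_{i,k} - g_{i,ℓ} - g_{k,j} + g_{j,ℓ}` if `i<k<j<ℓ`,
`= -g_{k,i} + g_{k,j} + g_{i,ℓ} - g_{ℓ,j}` if `k<i<ℓ<j`, and `0` otherwise;
`φ(ẽ_{i,k,j}) = g_{i,j} - g_{k,j}` if `i<k<j`, `j<i<k`, or `k<j<i`, and `0` otherwise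
(written multiplicatively in the abelian kernel of `G_n`). -/
theorem statement11 (n : ℕ) (π : BraidGroup n →* Equiv.Perm (Fin n))
    (hgen : IsBraidProj n π) (hsurj : Function.Surjective π)
    (p : Gq n π →* Equiv.Perm (Fin n))
    (hp : ∀ x : BraidGroup n, p (QuotientGroup.mk x) = π x)
    (s : Equiv.Perm (Fin n) → Gq n π)
    (hsec : ∀ g, p (s g) = g) (hone : s 1 = 1)
    -- the section lifts each transposition to the corresponding half twist
    (hs : ∀ i j : Fin n, i < j → s (Equiv.swap i j) = ht n π i j)
    -- normal form for products of disjoint transpositions (Lemma 4.8)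
    (hd : ∀ i j k l : Fin n, i < j → k < l →
      ({i, j} : Finset (Fin n)) ∩ {k, l} = ∅ →
      s (Equiv.swap i j * Equiv.swap k l) =
        if j < l then ht n π i j * ht n π k l else ht n π k l * ht n π i j)
    -- normal form for products of overlapping transpositions (Lemma 4.9)
    (he : ∀ i k j : Fin n, i ≠ k → i ≠ j → k ≠ j →
      s (Equiv.swap i j * Equiv.swap j k) =
        if k < j ∧ i < j then ht n π i k * ht n π i j
        else if i < k ∧ j < k then ht n π i j * ht n π j k
        else ht n π k j * ht n π k i) :
    -- value on c̃_{i,j}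
    (∀ i j : Fin n, i < j → s (Equiv.swap i j) * s (Equiv.swap i j) = ft n π i j) ∧
    -- value on d̃_{i,j,k,ℓ}
    (∀ i j k l : Fin n, i < j → k < l →
      ({i, j} : Finset (Fin n)) ∩ {k, l} = ∅ →
      (s (Equiv.swap i j) * s (Equiv.swap k l) *
          (s (Equiv.swap i j * Equiv.swap k l))⁻¹) *
        (s (Equiv.swap k l) * s (Equiv.swap i j) *
          (s (Equiv.swap k l * Equiv.swap i j))⁻¹)⁻¹ =
        if i < k ∧ k < j ∧ j < l then
          ft n π i k * (ft n π i l)⁻¹ * (ft n π k j)⁻¹ * ft n π j l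
        else if k < i ∧ i < l ∧ l < j then
          (ft n π k i)⁻¹ * ft n π k j * ft n π i l * (ft n π l j)⁻¹
        else 1) ∧
    -- value on ẽ_{i,k,j}
    (∀ i k j : Fin n, i ≠ k → i ≠ j → k ≠ j →
      (s (Equiv.swap i j) * s (Equiv.swap j k) *
          (s (Equiv.swap i j * Equiv.swap j k))⁻¹) *
        (s (Equiv.swap i k) * s (Equiv.swap i j) *
          (s (Equiv.swap i k * Equiv.swap i j))⁻¹)⁻¹ =
        if (i < k ∧ k < j) ∨ (j < i ∧ i < k) ∨ (k < j ∧ j < i) then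
          ft n π i j * (ft n π k j)⁻¹
        else 1) :=
  statement11_general n π p hp s hsec hs
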